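/- arXiv:1609.07710 — 3 statements merged into one kernel-verified Lean document; each statement's English description precedes it below -/
import Mathlib

section
/- For fixed λ > 0 and ρ > 0, the map q ↦ λ₀(q) is a continuous strictly increasing bijection from (0,∞) onto the interval (0, λ·(1 − e^{−ρ/λ})); in particular, λ₀(q) → 0 as q → 0⁺ and, for every target value t with 0 < t < λ·(1 − e^{−ρ/λ}), there exists a unique q* > 0 with λ₀(q*) = t (so the bisection search for q* in Proposition 1 has a unique solution). -/
/-!
Put `c = ρ / λ`. For `q > 0`, `λ₀(q) = λ (1 - u(q)⁻¹)` with `u(q) = (1 + c/q)^q`. Bernoulli's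
inequality `(1 + c/q)^(q/p) > 1 + c/p` for `p < q` shows that `u` is strictly increasing; `u → 1`
as `q → 0⁺` because `q log q → 0`, and `u → e^c` as `q → ∞`. A continuous strictly increasing
function on `(0, ∞)` maps it bijectively onto the open interval between its two limits.
-/

open Filter Real Set Topology

theorem Set.BijOn.existsUnique_mem_eq {α β : Type*} {f : α → β} {s : Set α} {t : Set β}
    (hf : BijOn f s t) {b : β} (hb : b ∈ t) : ∃! a, a ∈ s ∧ f a = b := by
  obtain ⟨a, ha, rfl⟩ := hf.surjOn hb
  exact ⟨a, ⟨ha, rfl⟩, fun a' ⟨ha', h⟩ => hf.injOn ha' ha h⟩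

theorem StrictMonoOn.bijOn_Ioi_Ioo_of_tendsto {α β : Type*} [ConditionallyCompleteLinearOrder α]
    [TopologicalSpace α] [OrderTopology α] [DenselyOrdered α] [NoMaxOrder α] [LinearOrder β]
    [TopologicalSpace β] [OrderClosedTopology β] {f : α → β} {a : α} {l u : β}
    (hmono : StrictMonoOn f (Ioi a)) (hcont : ContinuousOn f (Ioi a))
    (hl : Tendsto f (𝓝[>] a) (𝓝 l)) (hu : Tendsto f atTop (𝓝 u)) :
    BijOn f (Ioi a) (Ioo l u) := by
  refine ⟨fun x hx => ⟨?_, ?_⟩, hmono.injOn, isPreconnected_Ioi.intermediate_value_Ioo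
    (le_principal_iff.2 self_mem_nhdsWithin) (le_principal_iff.2 (Ioi_mem_atTop a)) hcont hl hu⟩
  · obtain ⟨y, hay, hyx⟩ := exists_between (mem_Ioi.1 hx)
    refine (le_of_tendsto hl ?_).trans_lt (hmono hay hx hyx)
    filter_upwards [Ioo_mem_nhdsGT hay] with z hz
    exact (hmono hz.1 hay hz.2).le
  · obtain ⟨y, hxy⟩ := exists_gt x
    have hy : y ∈ Ioi a := (mem_Ioi.1 hx).trans hxy
    refine (hmono hx hy hxy).trans_le (ge_of_tendsto hu ?_)
    filter_upwards [eventually_ge_atTop y] with z hz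
    exact hmono.monotoneOn hy (hy.out.trans_le hz) hz

theorem strictMonoOn_one_add_div_rpow {c : ℝ} (hc : 0 < c) :
    StrictMonoOn (fun q : ℝ => (1 + c / q) ^ q) (Ioi 0) := by
  intro p (hp : 0 < p) q (hq : 0 < q) hpq
  have hcq : 0 < c / q := div_pos hc hq
  have hbase : 1 + c / p < (1 + c / q) ^ (q / p) := by
    have := one_add_mul_self_lt_rpow_one_add (by linarith) hcq.ne' ((one_lt_div hp).2 hpq)
    rwa [show q / p * (c / q) = c / p by field_simp] at this
  calc (1 + c / p) ^ p < ((1 + c / q) ^ (q / p)) ^ p := by gcongr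
    _ = (1 + c / q) ^ q := by rw [← rpow_mul (by positivity), div_mul_cancel₀ _ hp.ne']

theorem continuousOn_one_add_div_rpow {c : ℝ} (hc : 0 ≤ c) :
    ContinuousOn (fun q : ℝ => (1 + c / q) ^ q) (Ioi 0) := by
  refine .rpow ?_ continuousOn_id fun q (hq : 0 < q) => Or.inl (by positivity)
  exact continuousOn_const.add (continuousOn_const.div continuousOn_id fun q hq => ne_of_gt hq)

theorem tendsto_mul_log_one_add_div_nhdsGT_zero {c : ℝ} (hc : 0 < c) :
    Tendsto (fun q : ℝ => q * log (1 + c / q)) (𝓝[>] 0) (𝓝 0) := by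
  have hshift : Tendsto (fun q : ℝ => q * log (q + c)) (𝓝 0) (𝓝 0) := by
    have : ContinuousAt (fun q : ℝ => q * log (q + c)) 0 :=
      continuousAt_id.mul ((continuousAt_id.add continuousAt_const).log (by simpa using hc.ne'))
    simpa using this.tendsto
  have hself : Tendsto (fun q : ℝ => q * log q) (𝓝 0) (𝓝 0) := by
    simpa using continuous_mul_log.tendsto 0
  have hdiff := (hshift.sub hself).mono_left (nhdsWithin_le_nhds (s := Ioi 0))
  rw [sub_zero] at hdiff
  refine hdiff.congr' ?_
  filter_upwards [self_mem_nhdsWithin] with q (hq : 0 < q)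
  rw [one_add_div hq.ne', log_div (by positivity) hq.ne', mul_sub, add_comm]

theorem tendsto_one_add_div_rpow_nhdsGT_zero {c : ℝ} (hc : 0 < c) :
    Tendsto (fun q : ℝ => (1 + c / q) ^ q) (𝓝[>] 0) (𝓝 1) := by
  have := (tendsto_mul_log_one_add_div_nhdsGT_zero hc).rexp
  rw [exp_zero] at this
  refine this.congr' ?_
  filter_upwards [self_mem_nhdsWithin] with q (hq : 0 < q)
  rw [rpow_def_of_pos (by positivity), mul_comm]

/-- For fixed `lam > 0` and `ρ > 0`, the map `q ↦ λ₀(q) = lam * (1 - (1 + ρ/(q*lam)) ^ (-q))`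
is a continuous strictly increasing bijection from `(0,∞)` onto `(0, lam * (1 - exp (-ρ/lam)))`;
moreover `λ₀(q) → 0` as `q → 0⁺`, and for every target `t` in that interval there is a unique
`q* > 0` with `λ₀(q*) = t` (uniqueness of the bisection solution in Proposition 1). -/
theorem lambda0_bijective_onto_interval (lam ρ : ℝ) (hlam : 0 < lam) (hρ : 0 < ρ) :
    ContinuousOn (fun q : ℝ => lam * (1 - (1 + ρ / (q * lam)) ^ (-q))) (Set.Ioi 0) ∧
    StrictMonoOn (fun q : ℝ => lam * (1 - (1 + ρ / (q * lam)) ^ (-q))) (Set.Ioi 0) ∧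
    Set.BijOn (fun q : ℝ => lam * (1 - (1 + ρ / (q * lam)) ^ (-q))) (Set.Ioi 0)
      (Set.Ioo 0 (lam * (1 - Real.exp (-(ρ / lam))))) ∧
    Tendsto (fun q : ℝ => lam * (1 - (1 + ρ / (q * lam)) ^ (-q)))
      (nhdsWithin 0 (Set.Ioi 0)) (nhds 0) ∧
    ∀ t : ℝ, 0 < t → t < lam * (1 - Real.exp (-(ρ / lam))) →
      ∃! q : ℝ, 0 < q ∧ lam * (1 - (1 + ρ / (q * lam)) ^ (-q)) = t := by
  set lam0 : ℝ → ℝ := fun q => lam * (1 - (1 + ρ / (q * lam)) ^ (-q))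
  set c := ρ / lam
  have hc : 0 < c := div_pos hρ hlam
  have heq : EqOn lam0 (fun q => lam * (1 - ((1 + c / q) ^ q)⁻¹)) (Ioi 0) :=
    fun q (hq : 0 < q) => by
      simp only [lam0]
      rw [mul_comm q, ← div_div, rpow_neg (by positivity)]
  have hcont : ContinuousOn lam0 (Ioi 0) :=
    (continuousOn_const.mul (continuousOn_const.sub
      ((continuousOn_one_add_div_rpow hc.le).inv₀ fun q (hq : 0 < q) => by positivity))).congr heq
  have hmono : StrictMonoOn lam0 (Ioi 0) := by
    intro p (hp : 0 < p) q hq hpq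
    rw [heq hp, heq hq]
    dsimp only
    gcongr
    exact strictMonoOn_one_add_div_rpow hc hp hq hpq
  have hzero : Tendsto lam0 (𝓝[>] 0) (𝓝 0) := by
    have := ((tendsto_one_add_div_rpow_nhdsGT_zero hc).inv₀ one_ne_zero).const_sub 1 |>.const_mul lam
    rw [inv_one, sub_self, mul_zero] at this
    exact this.congr' (eventuallyEq_nhdsWithin_of_eqOn heq).symm
  have htop : Tendsto lam0 atTop (𝓝 (lam * (1 - exp (-c)))) := by
    have := ((tendsto_one_add_div_rpow_exp c).inv₀ (exp_pos c).ne').const_sub 1 |>.const_mul lam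
    rw [← exp_neg] at this
    exact this.congr' (heq.eventuallyEq_of_mem (Ioi_mem_atTop 0)).symm
  have hbij := hmono.bijOn_Ioi_Ioo_of_tendsto hcont hzero htop
  exact ⟨hcont, hmono, hbij, hzero, fun t ht0 htc => hbij.existsUnique_mem_eq ⟨ht0, htc⟩⟩
end

section
/- For fixed ρ > 0 and q > 0, the approximate active-BS density is strictly increasing in the BS density: the map λ ↦ λ·[1 − (1 + ρ/(qλ))^{−q}] is strictly increasing on (0,∞), i.e., denser deployments activate strictly more BSs per unit area. -/
/-!
Writing `t = ρ / (q λ)`, the derivative of `λ ↦ λ (1 - (1 + t)^(-q))` is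
`1 - (1 + t)^(-q) - q t (1 + t)^(-q-1) = 1 - (1 + (q + 1) t) / (1 + t)^(q + 1)`,
which is positive by Bernoulli's inequality `1 + (q + 1) t < (1 + t)^(q + 1)`.
-/

open Real Set

lemma one_add_rpow_neg_add_mul_rpow_neg_sub_one_lt_one {q t : ℝ} (hq : 0 < q) (ht : -1 < t)
    (ht₀ : t ≠ 0) : (1 + t) ^ (-q) + q * t * (1 + t) ^ (-q - 1) < 1 := by
  have hpos : 0 < 1 + t := by linarith
  have bernoulli : 1 + (q + 1) * t < (1 + t) ^ (q + 1) :=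
    one_add_mul_self_lt_rpow_one_add ht.le ht₀ (by linarith)
  calc (1 + t) ^ (-q) + q * t * (1 + t) ^ (-q - 1)
      = (1 + (q + 1) * t) / (1 + t) ^ (q + 1) := by
        rw [rpow_sub_one hpos.ne', rpow_add_one hpos.ne', rpow_neg hpos.le]
        field_simp
        ring
    _ < 1 := (div_lt_one (by positivity)).2 bernoulli

lemma hasDerivAt_mul_one_sub_one_add_div_rpow_neg {c q x : ℝ} (hx : x ≠ 0)
    (hcx : 1 + c / x ≠ 0) :
    HasDerivAt (fun y ↦ y * (1 - (1 + c / y) ^ (-q)))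
      (1 - ((1 + c / x) ^ (-q) + q * (c / x) * (1 + c / x) ^ (-q - 1))) x := by
  have hinner : HasDerivAt (fun y ↦ 1 + c / y) (c * -(x ^ 2)⁻¹) x := by
    simpa only [div_eq_mul_inv] using ((hasDerivAt_inv hx).const_mul c).const_add 1
  refine ((hasDerivAt_id' x).fun_mul
    ((hinner.rpow_const (p := -q) (Or.inl hcx)).const_sub 1)).congr_deriv ?_
  field_simp
  ring

lemma strictMonoOn_mul_one_sub_one_add_div_rpow_neg {c q : ℝ} (hc : 0 < c) (hq : 0 < q) :
    StrictMonoOn (fun x ↦ x * (1 - (1 + c / x) ^ (-q))) (Ioi 0) := by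
  have hderiv : ∀ x ∈ Ioi (0 : ℝ), HasDerivAt (fun y ↦ y * (1 - (1 + c / y) ^ (-q)))
      (1 - ((1 + c / x) ^ (-q) + q * (c / x) * (1 + c / x) ^ (-q - 1))) x :=
    fun x (hx : 0 < x) ↦ hasDerivAt_mul_one_sub_one_add_div_rpow_neg hx.ne' (by positivity)
  refine strictMonoOn_of_deriv_pos (convex_Ioi 0)
    (fun x hx ↦ (hderiv x hx).continuousAt.continuousWithinAt) fun x hx ↦ ?_
  rw [interior_Ioi] at hx
  have ht : 0 < c / x := div_pos hc hx
  rw [(hderiv x hx).deriv, sub_pos]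
  exact one_add_rpow_neg_add_mul_rpow_neg_sub_one_lt_one hq (by linarith) ht.ne'

/-- For fixed UE density `ρ > 0` and `q > 0`, the approximate active-BS density
`lam ↦ lam * (1 - (1 + ρ/(q*lam)) ^ (-q))` is strictly increasing in the BS density
`lam` on `(0,∞)`. -/
theorem lambda0_strictMono_in_BS_density (ρ q : ℝ) (hρ : 0 < ρ) (hq : 0 < q) :
    StrictMonoOn (fun lam : ℝ => lam * (1 - (1 + ρ / (q * lam)) ^ (-q))) (Set.Ioi 0) := by
  simp_rw [← div_div]
  exact strictMonoOn_mul_one_sub_one_add_div_rpow_neg (div_pos hρ hq) hq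
end

section
/- Let λ > 0, let Pr^L : (0,∞) → [0,1] be continuous, and let φ : (0,∞) → (0,∞) be a strictly increasing continuously differentiable bijection with inverse ψ. Define Λ^L(r) = 2πλ ∫₀^r Pr^L(u)·u du, Λ^NL(r) = 2πλ ∫₀^r (1 − Pr^L(u))·u du, and the association-distance densities f^L(r) = exp(−Λ^NL(φ(r)) − Λ^L(r))·Pr^L(r)·2πλr and f^NL(r) = exp(−Λ^L(ψ(r)) − Λ^NL(r))·(1 − Pr^L(r))·2πλr. If Λ^L(r) + Λ^NL(φ(r)) → ∞ as r → ∞, then ∫₀^∞ f^L(r) dr + ∫₀^∞ f^NL(r) dr = 1; i.e., F_R(+∞) = F_R^L(+∞) + F_R^NL(+∞) = 1, so F_R is the CDF of the UE association distance. -/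
open MeasureTheory Filter Set Topology Function

/-!
Put `G r = ΛL r + ΛNL (φ r)`: the association distance exceeds `r` exactly when there is no LoS
base station within `r` and no NLoS one within `φ r`, so `exp (-G)` is its survival function.
Indeed `G' exp (-G) = fL + φ' · (fNL ∘ φ)`, and the substitution `s = φ r` turns `∫ fNL` into
`∫ φ' · (fNL ∘ φ)`, so the two integrals add up to `∫₀^∞ G' exp (-G) = exp (-G 0⁺) = 1`.
-/

theorem HasDerivAt.nonneg_of_monotoneOn_of_isOpen {g : ℝ → ℝ} {g' x : ℝ} {s : Set ℝ}
    (hs : IsOpen s) (hx : x ∈ s) (hd : HasDerivAt g g' x) (hg : MonotoneOn g s) : 0 ≤ g' :=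
  hd.hasDerivWithinAt.nonneg_of_monotoneOn
    (by simpa using PerfectSpace.univ_preperfect.open_inter hs x ⟨hx, trivial⟩) hg

theorem tendsto_nhdsGT_of_monotoneOn_of_image_eq {φ : ℝ → ℝ} {a b : ℝ}
    (hφ : MonotoneOn φ (Ioi a)) (himage : φ '' Ioi a = Ioi b) :
    Tendsto φ (𝓝[>] a) (𝓝[>] b) := by
  refine tendsto_nhdsWithin_iff.2 ⟨?_, ?_⟩
  · simpa [himage] using hφ.tendsto_nhdsGT (himage ▸ bddBelow_Ioi)
  · filter_upwards [self_mem_nhdsWithin] with x hx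
    exact himage ▸ mem_image_of_mem φ hx

theorem integral_image_eq_integral_deriv_smul_of_strictMonoOn {E : Type*} [NormedAddCommGroup E]
    [NormedSpace ℝ E] {φ φ' : ℝ → ℝ} {s t : Set ℝ} (hs : IsOpen s)
    (hφ : ∀ x ∈ s, HasDerivAt φ (φ' x) x) (hmono : StrictMonoOn φ s) (himage : φ '' s = t)
    (f : ℝ → E) : ∫ y in t, f y = ∫ x in s, φ' x • f (φ x) := by
  rw [← himage, integral_image_eq_integral_abs_deriv_smul hs.measurableSet
    (fun x hx => (hφ x hx).hasDerivWithinAt) hmono.injOn]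
  refine setIntegral_congr_fun hs.measurableSet fun x hx => ?_
  rw [abs_of_nonneg ((hφ x hx).nonneg_of_monotoneOn_of_isOpen hs hx hmono.monotoneOn)]

theorem integral_Ioi_of_hasDerivAt_of_nonneg_of_tendsto_nhdsGT {g g' : ℝ → ℝ} {a l₀ l : ℝ}
    (h₀ : Tendsto g (𝓝[>] a) (𝓝 l₀)) (hderiv : ∀ x ∈ Ioi a, HasDerivAt g (g' x) x)
    (g'_nonneg : ∀ x ∈ Ioi a, 0 ≤ g' x) (hg : Tendsto g atTop (𝓝 l)) :
    IntegrableOn g' (Ioi a) ∧ ∫ x in Ioi a, g' x = l - l₀ := by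
  classical
  -- `update g a l₀` is continuous at `a⁺` and agrees with `g` on `(a, ∞)`.
  have hcont : ContinuousWithinAt (update g a l₀) (Ici a) a := by
    rwa [continuousWithinAt_update_same, Ici_sdiff_left]
  have hderiv' : ∀ x ∈ Ioi a, HasDerivAt (update g a l₀) (g' x) x := fun x hx =>
    (hderiv x hx).congr_of_eventuallyEq <| by
      filter_upwards [isOpen_Ioi.mem_nhds hx] with y hy using update_of_ne hy.ne' _ _
  have hg' : Tendsto (update g a l₀) atTop (𝓝 l) := hg.congr' <| by
    filter_upwards [Ioi_mem_atTop a] with y hy using (update_of_ne hy.ne' _ _).symm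
  refine ⟨integrableOn_Ioi_deriv_of_nonneg hcont hderiv' g'_nonneg hg', ?_⟩
  rw [integral_Ioi_of_hasDerivAt_of_nonneg hcont hderiv' g'_nonneg hg', update_self]

theorem integral_Ioi_deriv_mul_exp_neg {G G' : ℝ → ℝ} {a G₀ : ℝ}
    (hG : ∀ x ∈ Ioi a, HasDerivAt G (G' x) x) (hG' : ∀ x ∈ Ioi a, 0 ≤ G' x)
    (h₀ : Tendsto G (𝓝[>] a) (𝓝 G₀)) (htop : Tendsto G atTop atTop) :
    IntegrableOn (fun x => G' x * Real.exp (-G x)) (Ioi a) ∧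
      ∫ x in Ioi a, G' x * Real.exp (-G x) = Real.exp (-G₀) := by
  have hderiv : ∀ x ∈ Ioi a,
      HasDerivAt (fun x => -Real.exp (-G x)) (G' x * Real.exp (-G x)) x := fun x hx =>
    ((hG x hx).fun_neg.exp).fun_neg.congr_deriv (by ring)
  have h₀' : Tendsto (fun x => -Real.exp (-G x)) (𝓝[>] a) (𝓝 (-Real.exp (-G₀))) :=
    (Real.continuous_exp.tendsto _ |>.comp h₀.neg).neg
  have htop' : Tendsto (fun x => -Real.exp (-G x)) atTop (𝓝 0) := by
    simpa using (Real.tendsto_exp_atBot.comp (tendsto_neg_atTop_atBot.comp htop)).neg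
  simpa using integral_Ioi_of_hasDerivAt_of_nonneg_of_tendsto_nhdsGT h₀' hderiv
    (fun x hx => mul_nonneg (hG' x hx) (Real.exp_pos _).le) htop'

theorem integral_add_of_nonneg_of_integrable_add {α : Type*} [MeasurableSpace α] {μ : Measure α}
    {f g : α → ℝ} (hf : AEStronglyMeasurable f μ) (hf₀ : 0 ≤ᵐ[μ] f) (hg₀ : 0 ≤ᵐ[μ] g)
    (hfg : Integrable (fun x => f x + g x) μ) : ∫ x, f x + g x ∂μ = ∫ x, f x ∂μ + ∫ x, g x ∂μ := by
  have hf_int : Integrable f μ := hfg.mono' hf <| by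
    filter_upwards [hf₀, hg₀] with x hfx hgx
    simpa [abs_of_nonneg hfx] using hgx
  exact integral_add hf_int ((hfg.sub hf_int).congr (ae_of_all _ fun x => by simp))

theorem integral_mul_exp_neg_add_integral_mul_exp_neg_eq_one {A B a b : ℝ → ℝ} {t : ℝ}
    (hA : ∀ x ∈ Ioi t, HasDerivAt A (a x) x) (hB : ∀ x ∈ Ioi t, HasDerivAt B (b x) x)
    (ha : ContinuousOn a (Ioi t)) (ha₀ : ∀ x ∈ Ioi t, 0 ≤ a x) (hb₀ : ∀ x ∈ Ioi t, 0 ≤ b x)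
    (h₀ : Tendsto (fun x => A x + B x) (𝓝[>] t) (𝓝 0))
    (htop : Tendsto (fun x => A x + B x) atTop atTop) :
    (∫ x in Ioi t, a x * Real.exp (-(A x + B x))) + ∫ x in Ioi t, b x * Real.exp (-(A x + B x))
      = 1 := by
  have hAB : ∀ x ∈ Ioi t, HasDerivAt (fun x => A x + B x) (a x + b x) x := fun x hx =>
    (hA x hx).add (hB x hx)
  obtain ⟨hint, hone⟩ := integral_Ioi_deriv_mul_exp_neg hAB
    (fun x hx => add_nonneg (ha₀ x hx) (hb₀ x hx)) h₀ htop
  have hAB_cont : ContinuousOn (fun x => A x + B x) (Ioi t) := fun x hx =>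
    (hAB x hx).continuousAt.continuousWithinAt
  have hmeas : AEStronglyMeasurable (fun x => a x * Real.exp (-(A x + B x)))
      (volume.restrict (Ioi t)) :=
    (ha.mul hAB_cont.neg.rexp).aestronglyMeasurable measurableSet_Ioi
  rw [← integral_add_of_nonneg_of_integrable_add (g := fun x => b x * Real.exp (-(A x + B x)))
    hmeas
    (ae_restrict_of_forall_mem measurableSet_Ioi fun x hx =>
      mul_nonneg (ha₀ x hx) (Real.exp_pos _).le)
    (ae_restrict_of_forall_mem measurableSet_Ioi fun x hx =>
      mul_nonneg (hb₀ x hx) (Real.exp_pos _).le)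
    (by simpa only [add_mul] using hint.integrable)]
  simpa only [← add_mul, neg_zero, Real.exp_zero] using hone

noncomputable def radialIntensity (c : ℝ) (p : ℝ → ℝ) (r : ℝ) : ℝ := c * ∫ u in Ioc 0 r, p u * u

section radialIntensity

variable {p : ℝ → ℝ} {M : ℝ}

theorem norm_mul_id_le_of_mem_Ioc (hp : ∀ u ∈ Ioi 0, ‖p u‖ ≤ M) {r u : ℝ} (hu : u ∈ Ioc 0 r) :
    ‖p u * u‖ ≤ M * r := by
  rw [norm_mul, Real.norm_of_nonneg hu.1.le]
  exact mul_le_mul (hp u hu.1) hu.2 hu.1.le ((norm_nonneg _).trans (hp u hu.1))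

theorem integrableOn_mul_id_Ioc (hpc : ContinuousOn p (Ioi 0)) (hp : ∀ u ∈ Ioi 0, ‖p u‖ ≤ M)
    (r : ℝ) : IntegrableOn (fun u => p u * u) (Ioc 0 r) :=
  IntegrableOn.of_bound measure_Ioc_lt_top
    ((hpc.mono Ioc_subset_Ioi_self).mul continuousOn_id |>.aestronglyMeasurable measurableSet_Ioc)
    (M * r) (ae_restrict_of_forall_mem measurableSet_Ioc fun _ => norm_mul_id_le_of_mem_Ioc hp)

theorem hasDerivAt_radialIntensity (c : ℝ) (hpc : ContinuousOn p (Ioi 0))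
    (hp : ∀ u ∈ Ioi 0, ‖p u‖ ≤ M) {x : ℝ} (hx : 0 < x) :
    HasDerivAt (radialIntensity c p) (c * (p x * x)) x := by
  have hcont : ContinuousOn (fun u => p u * u) (Ioi 0) := hpc.mul continuousOn_id
  have hFTC := intervalIntegral.integral_hasDerivAt_right
    ((intervalIntegrable_iff_integrableOn_Ioc_of_le hx.le).2 (integrableOn_mul_id_Ioc hpc hp x))
    (hcont.stronglyMeasurableAtFilter isOpen_Ioi x hx) (hcont.continuousAt (isOpen_Ioi.mem_nhds hx))
  refine (hFTC.const_mul c).congr_of_eventuallyEq ?_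
  filter_upwards [isOpen_Ioi.mem_nhds hx] with r (hr : 0 < r)
  rw [radialIntensity, intervalIntegral.integral_of_le hr.le]

theorem tendsto_radialIntensity_nhdsGT_zero (c : ℝ) (hp : ∀ u ∈ Ioi 0, ‖p u‖ ≤ M) :
    Tendsto (radialIntensity c p) (𝓝[>] 0) (𝓝 0) := by
  have hbound : ∀ r ∈ Ioi (0 : ℝ), ‖radialIntensity c p r‖ ≤ ‖c‖ * (M * r * r) := fun r hr => by
    rw [radialIntensity, norm_mul]
    gcongr
    simpa [max_eq_left hr.out.le] using
      norm_setIntegral_le_of_norm_le_const (s := Ioc 0 r) (μ := volume) measure_Ioc_lt_top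
        fun _ => norm_mul_id_le_of_mem_Ioc hp
  have hlim : Tendsto (fun r : ℝ => ‖c‖ * (M * r * r)) (𝓝[>] 0) (𝓝 0) := by
    simpa using ((continuous_const.mul continuous_id).mul continuous_id
      |>.const_mul ‖c‖ |>.tendsto 0).mono_left nhdsWithin_le_nhds
  exact squeeze_zero_norm' (eventually_nhdsWithin_of_forall hbound) hlim

end radialIntensity

theorem association_distance_density_normalized_general
    (lam : ℝ) (hlam : 0 < lam)
    (PrL : ℝ → ℝ) (hPrLcont : ContinuousOn PrL (Set.Ioi 0))
    (hPrL0 : ∀ u : ℝ, 0 < u → 0 ≤ PrL u) (hPrL1 : ∀ u : ℝ, 0 < u → PrL u ≤ 1)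
    (φ ψ : ℝ → ℝ)
    (hφmono : StrictMonoOn φ (Set.Ioi 0))
    (hφdiff : ContDiffOn ℝ 1 φ (Set.Ioi 0))
    (hφbij : Set.BijOn φ (Set.Ioi 0) (Set.Ioi 0))
    (hψφ : ∀ r : ℝ, 0 < r → ψ (φ r) = r)
    (ΛL ΛNL fL fNL : ℝ → ℝ)
    (hΛL : ∀ r : ℝ, ΛL r = 2 * Real.pi * lam * ∫ u in Set.Ioc 0 r, PrL u * u)
    (hΛNL : ∀ r : ℝ, ΛNL r = 2 * Real.pi * lam * ∫ u in Set.Ioc 0 r, (1 - PrL u) * u)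
    (hfL : ∀ r : ℝ, fL r =
      Real.exp (-ΛNL (φ r) - ΛL r) * (PrL r * (2 * Real.pi * lam * r)))
    (hfNL : ∀ r : ℝ, fNL r =
      Real.exp (-ΛL (ψ r) - ΛNL r) * ((1 - PrL r) * (2 * Real.pi * lam * r)))
    (hdiv : Tendsto (fun r : ℝ => ΛL r + ΛNL (φ r)) atTop atTop) :
    (∫ r in Set.Ioi (0 : ℝ), fL r) + (∫ r in Set.Ioi (0 : ℝ), fNL r) = 1 := by
  set c := 2 * Real.pi * lam
  have hc : 0 < c := by positivity
  have hPrL_norm : ∀ u ∈ Ioi (0 : ℝ), ‖PrL u‖ ≤ 1 := fun u hu => by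
    rw [Real.norm_eq_abs, abs_le]; constructor <;> linarith [hPrL0 u hu, hPrL1 u hu]
  have hNLoS_norm : ∀ u ∈ Ioi (0 : ℝ), ‖1 - PrL u‖ ≤ 1 := fun u hu => by
    rw [Real.norm_eq_abs, abs_le]; constructor <;> linarith [hPrL0 u hu, hPrL1 u hu]
  obtain rfl : ΛL = radialIntensity c PrL := funext hΛL
  obtain rfl : ΛNL = radialIntensity c (fun u => 1 - PrL u) := funext hΛNL
  have hφ' : ∀ x ∈ Ioi (0 : ℝ), HasDerivAt φ (deriv φ x) x := fun x hx =>
    ((hφdiff.contDiffAt (isOpen_Ioi.mem_nhds hx)).differentiableAt one_ne_zero).hasDerivAt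
  have hφ'_nonneg : ∀ x ∈ Ioi (0 : ℝ), 0 ≤ deriv φ x := fun x hx =>
    (hφ' x hx).nonneg_of_monotoneOn_of_isOpen isOpen_Ioi hx hφmono.monotoneOn
  have h₀ := (tendsto_radialIntensity_nhdsGT_zero c hPrL_norm).add
    ((tendsto_radialIntensity_nhdsGT_zero (p := fun u => 1 - PrL u) c hNLoS_norm).comp
      (tendsto_nhdsGT_of_monotoneOn_of_image_eq hφmono.monotoneOn hφbij.image_eq))
  rw [add_zero] at h₀
  rw [integral_image_eq_integral_deriv_smul_of_strictMonoOn isOpen_Ioi hφ' hφmono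
    hφbij.image_eq fNL]
  convert integral_mul_exp_neg_add_integral_mul_exp_neg_eq_one
    (fun x hx => hasDerivAt_radialIntensity c hPrLcont hPrL_norm hx)
    (fun x hx => (hasDerivAt_radialIntensity (p := fun u => 1 - PrL u) c
      (continuousOn_const.sub hPrLcont) hNLoS_norm (hφbij.mapsTo hx)).comp x (hφ' x hx))
    (continuousOn_const.mul (hPrLcont.mul continuousOn_id))
    (fun x hx => mul_nonneg hc.le (mul_nonneg (hPrL0 x hx) hx.le))
    (fun x hx => mul_nonneg (mul_nonneg hc.le
      (mul_nonneg (sub_nonneg.2 (hPrL1 _ (hφbij.mapsTo hx))) (hφbij.mapsTo hx).le))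
      (hφ'_nonneg x hx))
    h₀ hdiv using 2
  · refine setIntegral_congr_fun measurableSet_Ioi fun x hx => ?_
    rw [hfL, comp_apply]
    ring_nf
  · -- `ψ (φ x) = x` turns the exponent of `fNL (φ x)` into that of `fL x`.
    refine setIntegral_congr_fun measurableSet_Ioi fun x hx => ?_
    rw [hfNL, hψφ x hx, smul_eq_mul, comp_apply]
    ring_nf

/-- Normalization of the association-distance distribution (smallest-path-loss association
with probabilistic LoS/NLoS transmissions): with `ΛL`, `ΛNL` the LoS/NLoS intensity measures
of the disk of radius `r`, `φ = r₁` and `ψ = r₂` the mutually inverse strictly increasing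
equivalent-distance maps, and `fL`, `fNL` the LoS/NLoS association-distance densities, if
`ΛL r + ΛNL (φ r) → ∞` as `r → ∞` then `∫₀^∞ fL + ∫₀^∞ fNL = 1`, i.e. `F_R(+∞) = 1`. -/
theorem association_distance_density_normalized
    (lam : ℝ) (hlam : 0 < lam)
    (PrL : ℝ → ℝ) (hPrLcont : ContinuousOn PrL (Set.Ioi 0))
    (hPrL0 : ∀ u : ℝ, 0 < u → 0 ≤ PrL u) (hPrL1 : ∀ u : ℝ, 0 < u → PrL u ≤ 1)
    (φ ψ : ℝ → ℝ)
    (hφpos : ∀ r : ℝ, 0 < r → 0 < φ r)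
    (hφmono : StrictMonoOn φ (Set.Ioi 0))
    (hφdiff : ContDiffOn ℝ 1 φ (Set.Ioi 0))
    (hφbij : Set.BijOn φ (Set.Ioi 0) (Set.Ioi 0))
    (hψφ : ∀ r : ℝ, 0 < r → ψ (φ r) = r)
    (hφψ : ∀ r : ℝ, 0 < r → φ (ψ r) = r)
    (ΛL ΛNL fL fNL : ℝ → ℝ)
    (hΛL : ∀ r : ℝ, ΛL r = 2 * Real.pi * lam * ∫ u in Set.Ioc 0 r, PrL u * u)
    (hΛNL : ∀ r : ℝ, ΛNL r = 2 * Real.pi * lam * ∫ u in Set.Ioc 0 r, (1 - PrL u) * u)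
    (hfL : ∀ r : ℝ, fL r =
      Real.exp (-ΛNL (φ r) - ΛL r) * (PrL r * (2 * Real.pi * lam * r)))
    (hfNL : ∀ r : ℝ, fNL r =
      Real.exp (-ΛL (ψ r) - ΛNL r) * ((1 - PrL r) * (2 * Real.pi * lam * r)))
    (hdiv : Tendsto (fun r : ℝ => ΛL r + ΛNL (φ r)) atTop atTop) :
    (∫ r in Set.Ioi (0 : ℝ), fL r) + (∫ r in Set.Ioi (0 : ℝ), fNL r) = 1 :=
  association_distance_density_normalized_general lam hlam PrL hPrLcont hPrL0 hPrL1 φ ψ hφmono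
    hφdiff hφbij hψφ ΛL ΛNL fL fNL hΛL hΛNL hfL hfNL hdiv
end
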